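/- Let n, m ≥ 1 and let π ∈ J_{2n,2m} be a fixed-point-free involution; set I = I_{2n+2m}. Then the permutation I∘π has exactly two cycles (orbits), each of cardinality n+m; consequently n+m is even. -/

import Mathlib

noncomputable def cycleCount {N : ℕ} (π : Equiv.Perm (Fin N)) : ℕ :=
  Set.ncard {O : Set (Fin N) | ∃ x, O = {y | π.SameCycle x y}}

noncomputable def cyclesIn {N : ℕ} (π : Equiv.Perm (Fin N)) (C : Set (Fin N)) : ℕ :=
  Set.ncard {O : Set (Fin N) | (∃ x, O = {y | π.SameCycle x y}) ∧ O ⊆ C}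

/-- The annular permutation `γ_{p,q}` of `{1,…,p+q}` (0-indexed as `Fin (p+q)`),
with the two cycles `(1,…,p)` and `(p+1,…,p+q)`. -/
def annularGamma (p q : ℕ) : Equiv.Perm (Fin (p + q)) :=
  finSumFinEquiv.permCongr ((finRotate p).sumCongr (finRotate q))

/-- The interval involution `I_N = (1 2)(3 4)⋯(N-1 N)` of `{1,…,N}`
(0-indexed: swaps `2i ↔ 2i+1`), for `N` even. -/
def intervalInvolution (N : ℕ) : Equiv.Perm (Fin N) :=
  Function.Involutive.toPerm
    (fun x => ⟨if x.val % 2 = 0 then min (x.val + 1) (N - 1) else x.val - 1, by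
      rcases x with ⟨v, hv⟩
      dsimp only
      split <;> omega⟩)
    (by
      intro x
      rcases x with ⟨v, hv⟩
      apply Fin.ext
      dsimp only
      split_ifs <;> omega)

/-- The subgroup generated by `π` and `ρ` acts transitively on `Fin N`. -/
def JointTrans {N : ℕ} (π ρ : Equiv.Perm (Fin N)) : Prop :=
  ∀ x y : Fin N, ∃ g ∈ Subgroup.closure ({π, ρ} : Set (Equiv.Perm (Fin N))), g x = y

/-- `α` separates even numbers: no cycle of `α` contains two distinct even numbers
(an element `x : Fin N` represents the number `x.val + 1`). -/
def SeparatesEven {N : ℕ} (α : Equiv.Perm (Fin N)) : Prop :=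
  ∀ x y : Fin N, α.SameCycle x y → (x.val + 1) % 2 = 0 → (y.val + 1) % 2 = 0 → x = y

/-- `π ∈ S_NC(p,q)`: annular non-crossing permutations. -/
def AnnularNC (p q : ℕ) (π : Equiv.Perm (Fin (p + q))) : Prop :=
  JointTrans π (annularGamma p q) ∧
    cycleCount π + cycleCount (π⁻¹ * annularGamma p q) = p + q

/-- `A` witnesses bipartiteness of the graph `G_π`: `π(A) = A` and for each `i`,
exactly one of the (1-indexed) numbers `2i-1`, `2i` belongs to `A`. -/
def BipartSet {N : ℕ} (π : Equiv.Perm (Fin N)) (A : Set (Fin N)) : Prop :=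
  (⇑π) '' A = A ∧ ∀ i : ℕ, ∀ h : 2 * i + 1 < N,
    Xor' ((⟨2 * i, Nat.lt_of_succ_lt h⟩ : Fin N) ∈ A) ((⟨2 * i + 1, h⟩ : Fin N) ∈ A)

/-- The graph `G_π` is bipartite. -/
def GraphBipartite {N : ℕ} (π : Equiv.Perm (Fin N)) : Prop :=
  ∃ A : Set (Fin N), BipartSet π A

/-- `π ∈ J_{2n,2m}`: annular non-crossing, bipartite graph, and `π⁻¹γ` separates even. -/
def memJ (n m : ℕ) (π : Equiv.Perm (Fin (2 * n + 2 * m))) : Prop :=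
  AnnularNC (2 * n) (2 * m) π ∧ GraphBipartite π ∧
    SeparatesEven (π⁻¹ * annularGamma (2 * n) (2 * m))

/-!
Write `I = I_{2n+2m}` and `τ = I ∘ π`. Since `I` and `π` are fixed-point-free involutions, `I`
conjugates `τ` to `τ⁻¹`, so the orbits of the dihedral group `⟨I, π⟩` are the sets `C ∪ I(C)`
with `C` a cycle of `τ`, and a parity argument shows that `x` and `I x` never lie on a common
cycle of `τ`. On an even point `x` (in the paper's 1-indexed numbering, an odd number) `γ` agrees
with `I`, so `π⁻¹γ x = π(I x)` stays in the `⟨I, π⟩`-orbit of `x`; as `π⁻¹γ` separates even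
numbers, walking once around a cycle of `π⁻¹γ` shows that it never leaves that orbit either. Hence
`γ = π(π⁻¹γ)` preserves the `⟨I, π⟩`-orbits, and transitivity of `⟨π, γ⟩` makes `⟨I, π⟩`
transitive: `τ` has exactly the two cycles `C` and `I(C)`, of equal size `n + m`. Finally the
bipartition set `A` contains one point of each pair `{2i-1, 2i}`, so `|A| = n + m`, and it is a
union of blocks of the pairing `π`, so `|A|` is even.
-/

open Equiv Equiv.Perm Function

namespace Equiv.Perm

variable {α : Type*}

lemma rel_apply_of_mem_closure {r : α → α → Prop} (hr : Equivalence r) {S : Set (Perm α)}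
    (hS : ∀ g ∈ S, ∀ x, r x (g x)) {g : Perm α} (hg : g ∈ Subgroup.closure S) (x : α) :
    r x (g x) := by
  let H : Subgroup (Perm α) :=
    { carrier := {g | ∀ x, r x (g x)}
      one_mem' := fun x => hr.refl x
      mul_mem' := fun hg hh x => hr.trans (hh x) (hg _)
      inv_mem' := fun {g} hg x => by simpa using hr.symm (hg (g⁻¹ x)) }
  exact (Subgroup.closure_le H).2 hS hg x

lemma rel_apply_of_separates [Finite α] {r : α → α → Prop} (hr : Equivalence r) {σ : Perm α}
    {P : α → Prop} (hsep : ∀ x y, σ.SameCycle x y → P x → P y → x = y)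
    (h : ∀ x, ¬ P x → r x (σ x)) (x : α) : r x (σ x) := by
  by_cases hx : P x
  · have around : ∀ k : ℕ, r (σ x) ((σ ^ (k + 1)) x) := by
      intro k
      induction k with
      | zero => simpa using hr.refl (σ x)
      | succ k ih =>
        rw [pow_succ', Perm.mul_apply]
        by_cases hk : (σ ^ (k + 1)) x = x
        · rw [hk]
          exact hr.refl _
        · exact hr.trans ih
            (h _ fun hP => hk (hsep _ _ (sameCycle_pow_right.2 (SameCycle.refl _ _)) hx hP).symm)
    have hperiod := around (orderOf σ - 1)
    rw [Nat.sub_add_cancel (orderOf_pos σ), pow_orderOf_eq_one, Perm.one_apply] at hperiod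
    exact hr.symm hperiod
  · exact h x hx

lemma two_mul_ncard_eq_of_apply_mem_iff [Finite α] (f : Perm α) {s : Set α}
    (h : ∀ x, f x ∈ s ↔ x ∉ s) : 2 * s.ncard = Nat.card α := by
  have hpre : (f ⁻¹' s).ncard = s.ncard :=
    Set.ncard_preimage_of_injective_subset_range f.injective (by simp)
  rw [← Set.ncard_add_ncard_compl s, ← hpre, show f ⁻¹' s = sᶜ from Set.ext h]
  ring

lemma even_ncard_of_mapsTo [Finite α] {b : Perm α} (hb : Involutive b) (hb' : ∀ x, b x ≠ x)
    {s : Set α} (hs : Set.MapsTo b s s) : Even s.ncard := by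
  classical
  have := Fintype.ofFinite α
  let σ : Perm s := b.subtypePerm fun x => ⟨fun hx => hb x ▸ hs hx, fun hx => hs hx⟩
  have hσ : σ ^ 2 = 1 := Perm.ext fun x => Subtype.ext (hb x)
  have hsupp : σ.support = Finset.univ := by
    ext x
    simpa [σ, Subtype.ext_iff] using hb' x
  rw [even_iff_two_dvd, ← Nat.card_coe_set_eq, Nat.card_eq_fintype_card, ← Finset.card_univ,
    ← hsupp]
  exact two_dvd_card_support hσ

section InvolutionPair

variable {a b : Perm α}

lemma inv_eq_self_of_involutive (ha : Involutive a) : a⁻¹ = a :=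
  Involutive.symm_eq_self_of_involutive a ha

lemma zpow_mul_apply_of_involutive (ha : Involutive a) (hb : Involutive b) (k : ℤ) (x : α) :
    a (((a * b) ^ k) x) = ((a * b) ^ (-k)) (a x) := by
  have hconj : a * (a * b) * a⁻¹ = (a * b)⁻¹ := Perm.ext fun y => by
    simp [inv_eq_self_of_involutive ha, inv_eq_self_of_involutive hb, ha _]
  have h := conj_zpow (i := k) (a := a) (b := a * b)
  rw [hconj, inv_zpow'] at h
  simp [h]

lemma sameCycle_mul_apply_apply_iff (ha : Involutive a) (hb : Involutive b) {x y : α} :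
    (a * b).SameCycle (a x) (a y) ↔ (a * b).SameCycle x y := by
  constructor
  · rintro ⟨k, hk⟩
    refine ⟨-k, ?_⟩
    rw [← ha y, ← hk, zpow_mul_apply_of_involutive ha hb, ha]
  · rintro ⟨k, rfl⟩
    exact ⟨-k, (zpow_mul_apply_of_involutive ha hb k x).symm⟩

lemma sameCycle_mul_apply_left_iff (ha : Involutive a) (hb : Involutive b) {x y : α} :
    (a * b).SameCycle (a x) y ↔ (a * b).SameCycle x (a y) := by
  rw [← sameCycle_mul_apply_apply_iff ha hb, ha]

lemma not_sameCycle_mul_apply_self (ha : Involutive a) (hb : Involutive b)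
    (ha' : ∀ x, a x ≠ x) (hb' : ∀ x, b x ≠ x) (x : α) : ¬ (a * b).SameCycle x (a x) := by
  rintro ⟨k, hk⟩
  -- `a` reverses the cycle of `x`, so it fixes `(a * b) ^ (k / 2) x` if `k` is even, while `b`
  -- fixes `(a * b) ^ ((k - 1) / 2) x` if `k` is odd.
  have reflect : ∀ j : ℤ, a (((a * b) ^ j) x) = ((a * b) ^ (k - j)) x := fun j => by
    rw [zpow_mul_apply_of_involutive ha hb, ← hk, ← Perm.mul_apply, ← zpow_add, neg_add_eq_sub]
  rcases Int.even_or_odd' k with ⟨j, rfl | rfl⟩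
  · exact ha' _ (by rw [reflect j]; congr 2; ring)
  · refine hb' (((a * b) ^ j) x) ?_
    have hb_apply : ∀ y, b y = a ((a * b) y) := fun y => (ha (b y)).symm
    rw [hb_apply, ← Perm.mul_apply _ (_ ^ j), ← zpow_one_add, reflect]
    congr 2
    ring

/-- For involutions `a`, `b` this is the orbit relation of the dihedral group `⟨a, b⟩`. -/
def DihedralOrbitRel (a b : Perm α) (x y : α) : Prop :=
  (a * b).SameCycle x y ∨ (a * b).SameCycle (a x) y

lemma dihedralOrbitRel_equivalence (ha : Involutive a) (hb : Involutive b) :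
    Equivalence (DihedralOrbitRel a b) where
  refl x := Or.inl (SameCycle.refl _ x)
  symm {x y} := by
    rintro (h | h)
    · exact Or.inl h.symm
    · exact Or.inr ((sameCycle_mul_apply_left_iff ha hb).1 h).symm
  trans {x y z} := by
    rintro (h₁ | h₁) (h₂ | h₂)
    · exact Or.inl (h₁.trans h₂)
    · exact Or.inr (((sameCycle_mul_apply_apply_iff ha hb).2 h₁).trans h₂)
    · exact Or.inr (h₁.trans h₂)
    · exact Or.inl (((sameCycle_mul_apply_left_iff ha hb).1 h₁).trans h₂)

lemma dihedralOrbitRel_apply_left (x : α) : DihedralOrbitRel a b x (a x) :=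
  Or.inr (SameCycle.refl _ _)

lemma dihedralOrbitRel_apply_right (hb : Involutive b) (x : α) : DihedralOrbitRel a b x (b x) :=
  Or.inr (SameCycle.symm ⟨1, by simp [hb x]⟩)

lemma sameCycle_mul_apply_iff_not (ha : Involutive a) (hb : Involutive b)
    (ha' : ∀ x, a x ≠ x) (hb' : ∀ x, b x ≠ x) (hconn : ∀ x y, DihedralOrbitRel a b x y)
    (x y : α) : (a * b).SameCycle x (a y) ↔ ¬ (a * b).SameCycle x y := by
  refine ⟨fun h₁ h₂ => not_sameCycle_mul_apply_self ha hb ha' hb' y (h₂.symm.trans h₁), ?_⟩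
  intro h
  rcases hconn y x with h' | h'
  · exact absurd h'.symm h
  · exact h'.symm

end InvolutionPair

end Equiv.Perm

lemma cycleCount_eq_two {N : ℕ} {τ : Perm (Fin N)} {x y : Fin N} (hxy : ¬ τ.SameCycle x y)
    (hcover : ∀ z, τ.SameCycle x z ∨ τ.SameCycle y z) : cycleCount τ = 2 := by
  have cycle_eq : ∀ {u v}, τ.SameCycle u v → {z | τ.SameCycle u z} = {z | τ.SameCycle v z} :=
    fun h => Set.ext fun _ => ⟨h.symm.trans, h.trans⟩
  have hcycles : {O : Set (Fin N) | ∃ w, O = {z | τ.SameCycle w z}} =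
      {{z | τ.SameCycle x z}, {z | τ.SameCycle y z}} := by
    ext O
    constructor
    · rintro ⟨w, rfl⟩
      exact (hcover w).imp (fun h => (cycle_eq h).symm) (fun h => (cycle_eq h).symm)
    · rintro (rfl | rfl)
      exacts [⟨x, rfl⟩, ⟨y, rfl⟩]
  rw [cycleCount, hcycles, Set.ncard_pair]
  intro h
  have hy : y ∈ {z | τ.SameCycle y z} := Perm.SameCycle.refl τ y
  rw [← h] at hy
  exact hxy hy

lemma val_finRotate_of_add_one_lt {n : ℕ} (i : Fin n) (h : i.val + 1 < n) :
    (finRotate n i : ℕ) = i.val + 1 := by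
  obtain ⟨n, rfl⟩ : ∃ n', n = n' + 1 := ⟨n - 1, by omega⟩
  rw [coe_finRotate_of_ne_last]
  rintro rfl
  simp at h

lemma annularGamma_val_of_add_one_ne {p q : ℕ} (x : Fin (p + q)) (hp : x.val + 1 ≠ p)
    (hpq : x.val + 1 ≠ p + q) : (annularGamma p q x : ℕ) = x.val + 1 := by
  induction x using Fin.addCases with
  | left i =>
    simp only [annularGamma, permCongr_apply, finSumFinEquiv_symm_apply_castAdd,
      Perm.sumCongr_apply, Sum.map_inl, finSumFinEquiv_apply_left, Fin.val_castAdd] at hp ⊢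
    exact val_finRotate_of_add_one_lt i (by omega)
  | right j =>
    simp only [annularGamma, permCongr_apply, finSumFinEquiv_symm_apply_natAdd,
      Perm.sumCongr_apply, Sum.map_inr, finSumFinEquiv_apply_right, Fin.val_natAdd] at hpq ⊢
    rw [val_finRotate_of_add_one_lt j (by omega)]
    ring

section IntervalInvolution

variable {N : ℕ}

lemma intervalInvolution_val (hN : Even N) (x : Fin N) :
    (intervalInvolution N x : ℕ) = if x.val % 2 = 0 then x.val + 1 else x.val - 1 := by
  obtain ⟨k, rfl⟩ := hN
  have := x.isLt
  change (if x.val % 2 = 0 then min (x.val + 1) (k + k - 1) else x.val - 1) = _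
  split_ifs <;> omega

lemma intervalInvolution_involutive (N : ℕ) : Involutive (intervalInvolution N) :=
  Involutive.toPerm_involutive _

lemma intervalInvolution_apply_ne (hN : Even N) (x : Fin N) : intervalInvolution N x ≠ x := by
  intro h
  have hval := intervalInvolution_val hN x
  rw [h] at hval
  split_ifs at hval <;> omega

lemma annularGamma_eq_intervalInvolution {p q : ℕ} (hp : Even p) (hq : Even q)
    {x : Fin (p + q)} (hx : x.val % 2 = 0) : annularGamma p q x = intervalInvolution (p + q) x := by
  obtain ⟨k, rfl⟩ := hp
  obtain ⟨l, rfl⟩ := hq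
  ext
  rw [annularGamma_val_of_add_one_ne x (by omega) (by omega),
    intervalInvolution_val ⟨k + l, by ring⟩, if_pos hx]

lemma BipartSet.intervalInvolution_mem_iff (hN : Even N) {π : Perm (Fin N)} {A : Set (Fin N)}
    (hA : BipartSet π A) (x : Fin N) : intervalInvolution N x ∈ A ↔ x ∉ A := by
  have hval := intervalInvolution_val hN x
  obtain ⟨i, hi | hi⟩ : ∃ i, x.val = 2 * i ∨ x.val = 2 * i + 1 := ⟨x.val / 2, by omega⟩
  · have hlt : 2 * i + 1 < N := by obtain ⟨k, rfl⟩ := hN; omega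
    have hIx : intervalInvolution N x = ⟨2 * i + 1, hlt⟩ :=
      Fin.ext (by rw [hval, if_pos (by omega), hi])
    rw [hIx, show x = ⟨2 * i, by omega⟩ from Fin.ext hi]
    exact (xor_iff_not_iff'.1 (hA.2 i hlt)).symm
  · have hlt : 2 * i + 1 < N := hi ▸ x.isLt
    have hIx : intervalInvolution N x = ⟨2 * i, Nat.lt_of_succ_lt hlt⟩ :=
      Fin.ext (by rw [hval, if_neg (by omega), hi]; rfl)
    rw [hIx, show x = ⟨2 * i + 1, hlt⟩ from Fin.ext hi]
    exact xor_iff_iff_not.1 (hA.2 i hlt)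

end IntervalInvolution

lemma memJ.dihedralOrbitRel {n m : ℕ} {π : Perm (Fin (2 * n + 2 * m))} (hπ : memJ n m π)
    (hinv : Involutive π) (x y : Fin (2 * n + 2 * m)) :
    DihedralOrbitRel (intervalInvolution (2 * n + 2 * m)) π x y := by
  obtain ⟨⟨htrans, -⟩, -, hsep⟩ := hπ
  set I := intervalInvolution (2 * n + 2 * m)
  set γ := annularGamma (2 * n) (2 * m)
  have hr := dihedralOrbitRel_equivalence (intervalInvolution_involutive _) hinv
  have hπ_inv : π⁻¹ = π := inv_eq_self_of_involutive hinv
  have hσ : ∀ z, DihedralOrbitRel I π z ((π⁻¹ * γ) z) := by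
    refine rel_apply_of_separates hr hsep fun z hz => ?_
    rw [Perm.mul_apply, hπ_inv,
      annularGamma_eq_intervalInvolution (even_two_mul n) (even_two_mul m) (by omega)]
    exact hr.trans (dihedralOrbitRel_apply_left z) (dihedralOrbitRel_apply_right hinv _)
  have hγ : ∀ z, DihedralOrbitRel I π z (γ z) := fun z => by
    have hz := hr.trans (hσ z) (dihedralOrbitRel_apply_right hinv _)
    rwa [hπ_inv, Perm.mul_apply, hinv] at hz
  obtain ⟨g, hg, rfl⟩ := htrans x y
  refine rel_apply_of_mem_closure hr ?_ hg x
  rintro g (rfl | rfl)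
  exacts [dihedralOrbitRel_apply_right hinv, hγ]

theorem stmt_18_general (n m : ℕ) (hn : 1 ≤ n)
    (π : Equiv.Perm (Fin (2 * n + 2 * m))) (hπ : memJ n m π)
    (hpair : ∀ x, π (π x) = x ∧ π x ≠ x) :
    cycleCount (intervalInvolution (2 * n + 2 * m) * π) = 2 ∧
    (∀ x : Fin (2 * n + 2 * m),
      Set.ncard {y | (intervalInvolution (2 * n + 2 * m) * π).SameCycle x y} = n + m) ∧
    Even (n + m) := by
  set I := intervalInvolution (2 * n + 2 * m)
  have hN : Even (2 * n + 2 * m) := ⟨n + m, by ring⟩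
  have hI := intervalInvolution_involutive (2 * n + 2 * m)
  have hI' := intervalInvolution_apply_ne hN
  have hπ_inv : Involutive π := fun x => (hpair x).1
  have hπ' : ∀ x, π x ≠ x := fun x => (hpair x).2
  have hcycle_card (x) : 2 * Set.ncard {y | (I * π).SameCycle x y} = 2 * n + 2 * m := by
    simpa using two_mul_ncard_eq_of_apply_mem_iff I
      (sameCycle_mul_apply_iff_not hI hπ_inv hI' hπ' (hπ.dihedralOrbitRel hπ_inv) x)
  obtain ⟨A, hA⟩ := hπ.2.1
  have hA_card : 2 * A.ncard = 2 * n + 2 * m := by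
    simpa using two_mul_ncard_eq_of_apply_mem_iff I (hA.intervalInvolution_mem_iff hN)
  have hA_even : Even A.ncard :=
    even_ncard_of_mapsTo hπ_inv hπ' fun x hx => hA.1 ▸ Set.mem_image_of_mem π hx
  refine ⟨cycleCount_eq_two (not_sameCycle_mul_apply_self hI hπ_inv hI' hπ' ⟨0, by omega⟩)
    (hπ.dihedralOrbitRel hπ_inv _), fun x => by have := hcycle_card x; omega, ?_⟩
  rwa [show n + m = A.ncard by omega]

theorem stmt_18 (n m : ℕ) (hn : 1 ≤ n) (hm : 1 ≤ m)
    (π : Equiv.Perm (Fin (2 * n + 2 * m))) (hπ : memJ n m π)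
    (hpair : ∀ x, π (π x) = x ∧ π x ≠ x) :
    cycleCount (intervalInvolution (2 * n + 2 * m) * π) = 2 ∧
    (∀ x : Fin (2 * n + 2 * m),
      Set.ncard {y | (intervalInvolution (2 * n + 2 * m) * π).SameCycle x y} = n + m) ∧
    Even (n + m) :=
  stmt_18_general n m hn π hπ hpair
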